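/- Let K be the field of fractions of ℚ[x₀,x₁,x₂,x₃,x₄,x₅], set A = (x₂x₄+x₃x₅)/(x₀x₁), B = (x₁x₄+x₀x₅)/(x₂x₃), C = (x₀x₂+x₁x₃)/(x₄x₅), and let τ'₁, τ'₂, τ'₃ be the maps on K⁶ defined by: τ'₁ replaces (v₀,v₁) by ((v₂v₄+v₃v₅)/v₁, (v₂v₄+v₃v₅)/v₀); τ'₂ replaces (v₂,v₃) by ((v₁v₄+v₀v₅)/v₃, (v₁v₄+v₀v₅)/v₂); τ'₃ replaces (v₄,v₅) by ((v₀v₂+v₁v₃)/v₅, (v₀v₂+v₁v₃)/v₄); each fixes the remaining entries. For natural numbers s, t, let w be the word consisting of the block (3,2,1) repeated 2t times followed by the block (3,1,2) repeated 2s times, and let v be the result of applying the maps to X = (x₀,…,x₅) in left-to-right order along w. Then v₀ = x₀·A^{3s²+3st+3t²}·B^{3s²+3st+3t²−s+t}·C^{3s²+3st+3t²+s+2t} and v₁ = x₁ times the same monomial in A, B, C. -/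
import Mathlib

noncomputable section

/-- The polynomial ring ℚ[x₀,…,x₅]. -/
abbrev P : Type := MvPolynomial (Fin 6) ℚ

/-- K = Frac(ℚ[x₀,…,x₅]). -/
abbrev K : Type := FractionRing P

/-- The images of the variables x₀,…,x₅ in K. -/
def x (i : Fin 6) : K := algebraMap P K (MvPolynomial.X i)

/-- τ'₁ : replaces (v₀, v₁) by ((v₂v₄+v₃v₅)/v₁, (v₂v₄+v₃v₅)/v₀). -/
def tau1 (v : Fin 6 → K) : Fin 6 → K := fun k =>
  if k = 0 then (v 2 * v 4 + v 3 * v 5) / v 1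
  else if k = 1 then (v 2 * v 4 + v 3 * v 5) / v 0
  else v k

/-- τ'₂ : replaces (v₂, v₃) by ((v₁v₄+v₀v₅)/v₃, (v₁v₄+v₀v₅)/v₂). -/
def tau2 (v : Fin 6 → K) : Fin 6 → K := fun k =>
  if k = 2 then (v 1 * v 4 + v 0 * v 5) / v 3
  else if k = 3 then (v 1 * v 4 + v 0 * v 5) / v 2
  else v k

/-- τ'₃ : replaces (v₄, v₅) by ((v₀v₂+v₁v₃)/v₅, (v₀v₂+v₁v₃)/v₄). -/
def tau3 (v : Fin 6 → K) : Fin 6 → K := fun k =>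
  if k = 4 then (v 0 * v 2 + v 1 * v 3) / v 5
  else if k = 5 then (v 0 * v 2 + v 1 * v 3) / v 4
  else v k

/-- τ' indexed by Fin 3: `tau i` is τ'_{i+1}. -/
def tau : Fin 3 → (Fin 6 → K) → (Fin 6 → K)
  | 0 => tau1
  | 1 => tau2
  | 2 => tau3

/-- The initial labeled seed X = (x₀,…,x₅). -/
def X0 : Fin 6 → K := x

/-- Apply the maps τ'₍a₁₎, …, τ'₍aₙ₎ along the word `w` in left-to-right order. -/
def applyWord (w : List (Fin 3)) (v : Fin 6 → K) : Fin 6 → K :=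
  w.foldl (fun u a => tau a u) v

/-- A = (x₂x₄+x₃x₅)/(x₀x₁). -/
def A : K := (x 2 * x 4 + x 3 * x 5) / (x 0 * x 1)

/-- B = (x₁x₄+x₀x₅)/(x₂x₃). -/
def B : K := (x 1 * x 4 + x 0 * x 5) / (x 2 * x 3)

/-- C = (x₀x₂+x₁x₃)/(x₄x₅). -/
def C : K := (x 0 * x 2 + x 1 * x 3) / (x 4 * x 5)

/-- The canonical path (321)^{2t}(312)^{2s} of the southwest cone, reaching the
even alcove (-3s, -3t) (letters 1,2,3 are encoded as 0,1,2 in `Fin 3`). -/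
def word13 (s t : ℕ) : List (Fin 3) :=
  (List.replicate (2 * t) ([2, 1, 0] : List (Fin 3))).flatten ++
    (List.replicate (2 * s) ([2, 0, 1] : List (Fin 3))).flatten

-- ===== auxiliary material =====

lemma hx (i : Fin 6) : x i ≠ 0 := by
  rw [x, map_ne_zero_iff _ (IsFractionRing.injective P K)]
  exact MvPolynomial.X_ne_zero i

lemma hsumA : x 2 * x 4 + x 3 * x 5 ≠ 0 := by
  have h : x 2 * x 4 + x 3 * x 5 = algebraMap P K
      (MvPolynomial.X 2 * MvPolynomial.X 4 + MvPolynomial.X 3 * MvPolynomial.X 5) := by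
    simp [x, map_add, map_mul]
  rw [h, map_ne_zero_iff _ (IsFractionRing.injective P K)]
  intro hz
  have h2 := congrArg (MvPolynomial.eval (fun _ => (1:ℚ))) hz
  simp at h2

lemma hsumB : x 1 * x 4 + x 0 * x 5 ≠ 0 := by
  have h : x 1 * x 4 + x 0 * x 5 = algebraMap P K
      (MvPolynomial.X 1 * MvPolynomial.X 4 + MvPolynomial.X 0 * MvPolynomial.X 5) := by
    simp [x, map_add, map_mul]
  rw [h, map_ne_zero_iff _ (IsFractionRing.injective P K)]
  intro hz
  have h2 := congrArg (MvPolynomial.eval (fun _ => (1:ℚ))) hz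
  simp at h2

lemma hsumC : x 0 * x 2 + x 1 * x 3 ≠ 0 := by
  have h : x 0 * x 2 + x 1 * x 3 = algebraMap P K
      (MvPolynomial.X 0 * MvPolynomial.X 2 + MvPolynomial.X 1 * MvPolynomial.X 3) := by
    simp [x, map_add, map_mul]
  rw [h, map_ne_zero_iff _ (IsFractionRing.injective P K)]
  intro hz
  have h2 := congrArg (MvPolynomial.eval (fun _ => (1:ℚ))) hz
  simp at h2

lemma hA : A ≠ 0 := div_ne_zero hsumA (mul_ne_zero (hx 0) (hx 1))
lemma hB : B ≠ 0 := div_ne_zero hsumB (mul_ne_zero (hx 2) (hx 3))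
lemma hC : C ≠ 0 := div_ne_zero hsumC (mul_ne_zero (hx 4) (hx 5))

lemma sA : x 2 * x 4 + x 3 * x 5 = A * (x 0 * x 1) :=
  (div_mul_cancel₀ _ (mul_ne_zero (hx 0) (hx 1))).symm
lemma sB : x 1 * x 4 + x 0 * x 5 = B * (x 2 * x 3) :=
  (div_mul_cancel₀ _ (mul_ne_zero (hx 2) (hx 3))).symm
lemma sC : x 0 * x 2 + x 1 * x 3 = C * (x 4 * x 5) :=
  (div_mul_cancel₀ _ (mul_ne_zero (hx 4) (hx 5))).symm

/-- The monomial A^a B^b C^c. -/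
def M (a b c : ℤ) : K := A ^ a * B ^ b * C ^ c

lemma hM (a b c : ℤ) : M a b c ≠ 0 :=
  mul_ne_zero (mul_ne_zero (zpow_ne_zero _ hA) (zpow_ne_zero _ hB)) (zpow_ne_zero _ hC)

lemma M_mul (a b c a' b' c' : ℤ) : M a b c * M a' b' c' = M (a + a') (b + b') (c + c') := by
  simp only [M, zpow_add₀ hA, zpow_add₀ hB, zpow_add₀ hC]; ring

lemma M_congr {a b c a' b' c' : ℤ} (h1 : a = a') (h2 : b = b') (h3 : c = c') :
    M a b c = M a' b' c' := by subst h1; subst h2; subst h3; rfl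

lemma keyA (pA pB pC qA qB qC rA rB rC : ℤ) :
    M (1 + qA + rA - pA) (qB + rB - pB) (qC + rC - pC) * M pA pB pC
      = A * (M qA qB qC * M rA rB rC) := by
  rw [M_mul, M_mul]
  have : A = M 1 0 0 := by simp [M]
  rw [this, M_mul]
  exact M_congr (by ring) (by ring) (by ring)

lemma keyB (pA pB pC qA qB qC rA rB rC : ℤ) :
    M (pA + rA - qA) (1 + pB + rB - qB) (pC + rC - qC) * M qA qB qC
      = B * (M pA pB pC * M rA rB rC) := by
  rw [M_mul, M_mul]
  have : B = M 0 1 0 := by simp [M]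
  rw [this, M_mul]
  exact M_congr (by ring) (by ring) (by ring)

lemma keyC (pA pB pC qA qB qC rA rB rC : ℤ) :
    M (pA + qA - rA) (pB + qB - rB) (1 + pC + qC - rC) * M rA rB rC
      = C * (M pA pB pC * M qA qB qC) := by
  rw [M_mul, M_mul]
  have : C = M 0 0 1 := by simp [M]
  rw [this, M_mul]
  exact M_congr (by ring) (by ring) (by ring)

/-- Invariant: each coordinate is xᵢ times a Laurent monomial in A,B,C, pairwise. -/
def Good (pA pB pC qA qB qC rA rB rC : ℤ) (v : Fin 6 → K) : Prop :=
  v 0 = x 0 * M pA pB pC ∧ v 1 = x 1 * M pA pB pC ∧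
  v 2 = x 2 * M qA qB qC ∧ v 3 = x 3 * M qA qB qC ∧
  v 4 = x 4 * M rA rB rC ∧ v 5 = x 5 * M rA rB rC

lemma Good_of_eq {pA pB pC qA qB qC rA rB rC pA' pB' pC' qA' qB' qC' rA' rB' rC' : ℤ}
    {v : Fin 6 → K} (h : Good pA pB pC qA qB qC rA rB rC v)
    (e1 : pA = pA') (e2 : pB = pB') (e3 : pC = pC')
    (e4 : qA = qA') (e5 : qB = qB') (e6 : qC = qC')
    (e7 : rA = rA') (e8 : rB = rB') (e9 : rC = rC') :
    Good pA' pB' pC' qA' qB' qC' rA' rB' rC' v := by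
  subst e1; subst e2; subst e3; subst e4; subst e5; subst e6; subst e7; subst e8; subst e9
  exact h

lemma step1 {pA pB pC qA qB qC rA rB rC : ℤ} {v : Fin 6 → K}
    (h : Good pA pB pC qA qB qC rA rB rC v) :
    Good (1 + qA + rA - pA) (qB + rB - pB) (qC + rC - pC) qA qB qC rA rB rC (tau1 v) := by
  obtain ⟨h0, h1, h2, h3, h4, h5⟩ := h
  refine ⟨?_, ?_, h2, h3, h4, h5⟩
  · show (v 2 * v 4 + v 3 * v 5) / v 1 = _
    rw [h1, h2, h3, h4, h5, div_eq_iff (mul_ne_zero (hx 1) (hM pA pB pC))]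
    linear_combination M qA qB qC * M rA rB rC * sA -
      x 0 * x 1 * keyA pA pB pC qA qB qC rA rB rC
  · show (v 2 * v 4 + v 3 * v 5) / v 0 = _
    rw [h0, h2, h3, h4, h5, div_eq_iff (mul_ne_zero (hx 0) (hM pA pB pC))]
    linear_combination M qA qB qC * M rA rB rC * sA -
      x 0 * x 1 * keyA pA pB pC qA qB qC rA rB rC

lemma step2 {pA pB pC qA qB qC rA rB rC : ℤ} {v : Fin 6 → K}
    (h : Good pA pB pC qA qB qC rA rB rC v) :
    Good pA pB pC (pA + rA - qA) (1 + pB + rB - qB) (pC + rC - qC) rA rB rC (tau2 v) := by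
  obtain ⟨h0, h1, h2, h3, h4, h5⟩ := h
  refine ⟨h0, h1, ?_, ?_, h4, h5⟩
  · show (v 1 * v 4 + v 0 * v 5) / v 3 = _
    rw [h0, h1, h3, h4, h5, div_eq_iff (mul_ne_zero (hx 3) (hM qA qB qC))]
    linear_combination M pA pB pC * M rA rB rC * sB -
      x 2 * x 3 * keyB pA pB pC qA qB qC rA rB rC
  · show (v 1 * v 4 + v 0 * v 5) / v 2 = _
    rw [h0, h1, h2, h4, h5, div_eq_iff (mul_ne_zero (hx 2) (hM qA qB qC))]
    linear_combination M pA pB pC * M rA rB rC * sB -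
      x 2 * x 3 * keyB pA pB pC qA qB qC rA rB rC

lemma step3 {pA pB pC qA qB qC rA rB rC : ℤ} {v : Fin 6 → K}
    (h : Good pA pB pC qA qB qC rA rB rC v) :
    Good pA pB pC qA qB qC (pA + qA - rA) (pB + qB - rB) (1 + pC + qC - rC) (tau3 v) := by
  obtain ⟨h0, h1, h2, h3, h4, h5⟩ := h
  refine ⟨h0, h1, h2, h3, ?_, ?_⟩
  · show (v 0 * v 2 + v 1 * v 3) / v 5 = _
    rw [h0, h1, h2, h3, h5, div_eq_iff (mul_ne_zero (hx 5) (hM rA rB rC))]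
    linear_combination M pA pB pC * M qA qB qC * sC -
      x 4 * x 5 * keyC pA pB pC qA qB qC rA rB rC
  · show (v 0 * v 2 + v 1 * v 3) / v 4 = _
    rw [h0, h1, h2, h3, h4, div_eq_iff (mul_ne_zero (hx 4) (hM rA rB rC))]
    linear_combination M pA pB pC * M qA qB qC * sC -
      x 4 * x 5 * keyC pA pB pC qA qB qC rA rB rC

lemma applyWord_append (u w : List (Fin 3)) (v : Fin 6 → K) :
    applyWord (u ++ w) v = applyWord w (applyWord u v) := by
  simp [applyWord, List.foldl_append]

lemma applyWord_321 (v : Fin 6 → K) :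
    applyWord [2, 1, 0] v = tau1 (tau2 (tau3 v)) := rfl

lemma applyWord_312 (v : Fin 6 → K) :
    applyWord [2, 0, 1] v = tau2 (tau1 (tau3 v)) := rfl

/-- State after (321)^{2t}. -/
lemma good_t (t : ℕ) :
    Good (3*(t:ℤ)^2) (3*(t:ℤ)^2 + t) (3*(t:ℤ)^2 + 2*t)
         (3*(t:ℤ)^2 - t) (3*(t:ℤ)^2) (3*(t:ℤ)^2 + t)
         (3*(t:ℤ)^2 - 2*t) (3*(t:ℤ)^2 - t) (3*(t:ℤ)^2)
      (applyWord ((List.replicate (2 * t) ([2, 1, 0] : List (Fin 3))).flatten) X0) := by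
  induction t with
  | zero =>
      simp only [Nat.mul_zero, List.replicate_zero, List.flatten_nil]
      refine ⟨?_, ?_, ?_, ?_, ?_, ?_⟩ <;> simp [applyWord, X0, M]
  | succ t ih =>
      have hw : (List.replicate (2 * (t+1)) ([2, 1, 0] : List (Fin 3))).flatten
          = (List.replicate (2 * t) ([2, 1, 0] : List (Fin 3))).flatten
            ++ ([2, 1, 0] ++ [2, 1, 0]) := by
        rw [show 2 * (t+1) = 2 * t + 2 by ring, List.replicate_add, List.flatten_append]
        rfl
      rw [hw, applyWord_append, show (([2,1,0] ++ [2,1,0] : List (Fin 3))) = [2,1,0,2,1,0] from rfl]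
      have h1 := step1 (step2 (step3 (step1 (step2 (step3 ih)))))
      have : applyWord [2,1,0,2,1,0] (applyWord ((List.replicate (2 * t) ([2, 1, 0] : List (Fin 3))).flatten) X0)
          = tau1 (tau2 (tau3 (tau1 (tau2 (tau3 (applyWord ((List.replicate (2 * t) ([2, 1, 0] : List (Fin 3))).flatten) X0)))))) := rfl
      rw [this]
      refine Good_of_eq h1 ?_ ?_ ?_ ?_ ?_ ?_ ?_ ?_ ?_ <;> push_cast <;> ring

/-- State after (321)^{2t}(312)^{2s}. -/
lemma good_st (s t : ℕ) :
    Good (3*(s:ℤ)^2 + 3*s*t + 3*(t:ℤ)^2)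
         (3*(s:ℤ)^2 + 3*s*t + 3*(t:ℤ)^2 - s + t)
         (3*(s:ℤ)^2 + 3*s*t + 3*(t:ℤ)^2 + s + 2*t)
         (3*(s:ℤ)^2 + 3*s*t + 3*(t:ℤ)^2 + s - t)
         (3*(s:ℤ)^2 + 3*s*t + 3*(t:ℤ)^2)
         (3*(s:ℤ)^2 + 3*s*t + 3*(t:ℤ)^2 + 2*s + t)
         (3*(s:ℤ)^2 + 3*s*t + 3*(t:ℤ)^2 - s - 2*t)
         (3*(s:ℤ)^2 + 3*s*t + 3*(t:ℤ)^2 - 2*s - t)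
         (3*(s:ℤ)^2 + 3*s*t + 3*(t:ℤ)^2)
      (applyWord (word13 s t) X0) := by
  induction s with
  | zero =>
      have hw : word13 0 t = (List.replicate (2 * t) ([2, 1, 0] : List (Fin 3))).flatten := by
        simp [word13]
      rw [hw]
      refine Good_of_eq (good_t t) ?_ ?_ ?_ ?_ ?_ ?_ ?_ ?_ ?_ <;> push_cast <;> ring
  | succ s ih =>
      have hw : word13 (s+1) t = word13 s t ++ [2,0,1,2,0,1] := by
        rw [word13, word13, show 2 * (s+1) = 2 * s + 2 by ring, List.replicate_add,
          List.flatten_append, List.append_assoc]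
        rfl
      rw [hw, applyWord_append]
      have h1 := step2 (step1 (step3 (step2 (step1 (step3 ih)))))
      have : applyWord [2,0,1,2,0,1] (applyWord (word13 s t) X0)
          = tau2 (tau1 (tau3 (tau2 (tau1 (tau3 (applyWord (word13 s t) X0)))))) := rfl
      rw [this]
      refine Good_of_eq h1 ?_ ?_ ?_ ?_ ?_ ?_ ?_ ?_ ?_ <;> push_cast <;> ring

/-- Theorem 2.1, southwest-cone case |i| ≡ 0 mod 6, |j| ≡ 0 mod 3, i = −6s, j = −3t:
the vertex-0 and vertex-1 cluster variables at the even alcove (−3s, −3t). -/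
theorem alcove_sw_00 (s t : ℕ) :
    applyWord (word13 s t) X0 0 =
      x 0 * A ^ (3 * (s : ℤ) ^ 2 + 3 * s * t + 3 * t ^ 2)
          * B ^ (3 * (s : ℤ) ^ 2 + 3 * s * t + 3 * t ^ 2 - s + t)
          * C ^ (3 * (s : ℤ) ^ 2 + 3 * s * t + 3 * t ^ 2 + s + 2 * t) ∧
    applyWord (word13 s t) X0 1 =
      x 1 * A ^ (3 * (s : ℤ) ^ 2 + 3 * s * t + 3 * t ^ 2)
          * B ^ (3 * (s : ℤ) ^ 2 + 3 * s * t + 3 * t ^ 2 - s + t)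
          * C ^ (3 * (s : ℤ) ^ 2 + 3 * s * t + 3 * t ^ 2 + s + 2 * t) := by
  obtain ⟨h0, h1, -, -, -, -⟩ := good_st s t
  constructor
  · rw [h0]; rw [M]; ring
  · rw [h1]; rw [M]; ring
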